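/- Let k ≥ 2, d ≥ 1, T ≥ 1, and let (x_1,y_1),…,(x_T,y_T) ∈ ℝ^d × {1,…,k} be any sequence. Run the multiclass Perceptron on this sequence, producing iterates W_1,…,W_{T+1}, update indicators b_1,…,b_T ∈ {0,1}, and mistake count M_T = Σ_t b_t. Then for every U ∈ ℝ^{k×d} and every q ∈ [1,2], ⟨W_{T+1}, U⟩ ≥ M_T − M_T^{1−1/q} · (Σ_{t=1}^T ℓ(U,(x_t,y_t))^q)^{1/q}, where ⟨·,·⟩ is the entrywise (Frobenius) inner product of matrices. -/

import Mathlib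

open Finset

/-- Multiclass hinge loss: `max_{i ≠ y} [1 - (Ux)_y + (Ux)_i]_+`. -/
noncomputable def mcHinge {k d : ℕ} (U : Matrix (Fin k) (Fin d) ℝ)
    (x : Fin d → ℝ) (y : Fin k) : ℝ :=
  ⨆ i : {i : Fin k // i ≠ y}, max 0 (1 - U.mulVec x y + U.mulVec x i.val)

lemma mcHinge_nonneg {k d : ℕ} (hk : 2 ≤ k) (U : Matrix (Fin k) (Fin d) ℝ)
    (x : Fin d → ℝ) (y : Fin k) : 0 ≤ mcHinge U x y := by
  obtain ⟨i, hi⟩ := Fintype.exists_ne_of_one_lt_card (by rw [Fintype.card_fin]; exact hk) y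
  have := le_ciSup (f := fun i : {i : Fin k // i ≠ y} =>
      max 0 (1 - U.mulVec x y + U.mulVec x i.val))
    (Set.Finite.bddAbove (Set.finite_range _)) ⟨i, hi⟩
  exact le_trans (le_max_left _ _) this

lemma mcHinge_ge {k d : ℕ} (U : Matrix (Fin k) (Fin d) ℝ)
    (x : Fin d → ℝ) (y i : Fin k) (hi : i ≠ y) :
    1 - U.mulVec x y + U.mulVec x i ≤ mcHinge U x y := by
  have := le_ciSup (f := fun i : {i : Fin k // i ≠ y} =>
      max 0 (1 - U.mulVec x y + U.mulVec x i.val))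
    (Set.Finite.bddAbove (Set.finite_range _)) ⟨i, hi⟩
  exact le_trans (le_max_right _ _) this

theorem multiclass_perceptron_inner_product_lower_bound
    (k d T : ℕ) (hk : 2 ≤ k) (hd : 1 ≤ d) (hT : 1 ≤ T)
    (x : Fin T → Fin d → ℝ) (y : Fin T → Fin k)
    (W : ℕ → Matrix (Fin k) (Fin d) ℝ) (yh : Fin T → Fin k)
    (hW0 : W 0 = 0)
    (hargmax : ∀ t : Fin T, ∀ i : Fin k,
      (W t.val).mulVec (x t) i ≤ (W t.val).mulVec (x t) (yh t))
    (hWsucc : ∀ t : Fin T, W (t.val + 1) =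
      W t.val + (if yh t ≠ y t then (1:ℝ) else 0) •
        Matrix.vecMulVec (Pi.single (y t) 1 - Pi.single (yh t) 1) (x t))
    (M : ℝ) (hM : M = ∑ t, if yh t ≠ y t then (1:ℝ) else 0)
    (U : Matrix (Fin k) (Fin d) ℝ) (q : ℝ) (hq1 : 1 ≤ q) (hq2 : q ≤ 2) :
    M - M ^ (1 - 1/q) * (∑ t, (mcHinge U (x t) (y t)) ^ q) ^ (1/q)
      ≤ ∑ i, ∑ j, W T i j * U i j := by
  classical
  set b : Fin T → ℝ := fun t => if yh t ≠ y t then (1:ℝ) else 0 with hbdef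
  set ℓ : Fin T → ℝ := fun t => mcHinge U (x t) (y t) with hℓdef
  have hbmem : ∀ t, b t = 0 ∨ b t = 1 := by
    intro t; by_cases h : yh t ≠ y t <;> simp [hbdef, h]
  have hℓ0 : ∀ t, 0 ≤ ℓ t := fun t => mcHinge_nonneg hk U (x t) (y t)
  set inn : Matrix (Fin k) (Fin d) ℝ → ℝ := fun A => ∑ i, ∑ j, A i j * U i j with hinn
  set g : Fin T → ℝ := fun t =>
    b t * (U.mulVec (x t) (y t) - U.mulVec (x t) (yh t)) with hg
  set G : ℕ → ℝ := fun m => if h : m < T then g ⟨m, h⟩ else 0 with hG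
  -- inner product of the update matrix
  have hupd : ∀ t : Fin T,
      inn (Matrix.vecMulVec (Pi.single (y t) 1 - Pi.single (yh t) 1) (x t))
        = U.mulVec (x t) (y t) - U.mulVec (x t) (yh t) := by
    intro t
    have h1 : ∀ z : Fin k,
        (∑ j, ((Pi.single (y t) 1 - Pi.single (yh t) 1 : Fin k → ℝ) z * x t j) * U z j)
          = (Pi.single (y t) 1 - Pi.single (yh t) 1 : Fin k → ℝ) z * U.mulVec (x t) z := by
      intro z
      rw [Matrix.mulVec, dotProduct, Finset.mul_sum]
      exact Finset.sum_congr rfl fun j _ => by ring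
    simp only [hinn, Matrix.vecMulVec_apply]
    rw [Finset.sum_congr rfl fun z _ => h1 z]
    simp [Pi.sub_apply, sub_mul, Finset.sum_sub_distrib, Pi.single_apply, ite_mul,
      Finset.sum_ite_eq']
  have key : ∀ n, n ≤ T → inn (W n) = ∑ m ∈ Finset.range n, G m := by
    intro n
    induction n with
    | zero => intro _; simp [hinn, hW0]
    | succ m ih =>
      intro hm
      have hmT : m < T := hm
      have := hWsucc ⟨m, hmT⟩
      simp only [Fin.val_mk] at this
      rw [this]
      have hadd : ∀ A B : Matrix (Fin k) (Fin d) ℝ, inn (A + B) = inn A + inn B := by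
        intro A B
        simp [hinn, add_mul, Finset.sum_add_distrib]
      have hsmul : ∀ (c : ℝ) (A : Matrix (Fin k) (Fin d) ℝ), inn (c • A) = c * inn A := by
        intro c A
        simp [hinn, Finset.mul_sum, mul_assoc]
      rw [hadd, hsmul, hupd ⟨m, hmT⟩, ih (le_of_lt hmT), Finset.sum_range_succ]
      simp [hG, hmT, hg, hbdef]
  have hWT : inn (W T) = ∑ t : Fin T, g t := by
    rw [key T le_rfl, ← Fin.sum_univ_eq_sum_range]
    apply Finset.sum_congr rfl
    intro t _
    simp [hG]
  -- pointwise bound: g t ≥ b t * (1 - ℓ t)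
  have hpt : ∀ t, b t * (1 - ℓ t) ≤ g t := by
    intro t
    by_cases h : yh t ≠ y t
    · have hb1 : b t = 1 := by simp [hbdef, h]
      have := mcHinge_ge U (x t) (y t) (yh t) h
      simp only [hg, hb1, one_mul]
      have : 1 - ℓ t ≤ U.mulVec (x t) (y t) - U.mulVec (x t) (yh t) := by
        simp only [hℓdef]; linarith
      linarith
    · have hb0 : b t = 0 := by simp [hbdef, h]
      simp [hg, hb0]
  have hsum : M - ∑ t, b t * ℓ t ≤ inn (W T) := by
    rw [hWT, hM]
    have : ∑ t, b t * (1 - ℓ t) ≤ ∑ t, g t := Finset.sum_le_sum fun t _ => hpt t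
    calc (∑ t, b t) - ∑ t, b t * ℓ t = ∑ t, b t * (1 - ℓ t) := by
          rw [← Finset.sum_sub_distrib]
          exact Finset.sum_congr rfl fun t _ => by ring
      _ ≤ ∑ t, g t := this
  -- Hölder step: ∑ b t * ℓ t ≤ M ^ (1 - 1/q) * (∑ ℓ^q)^(1/q)
  have hMnn : 0 ≤ M := by
    rw [hM]; exact Finset.sum_nonneg fun t _ => by positivity
  have hholder : ∑ t, b t * ℓ t ≤ M ^ (1 - 1/q) * (∑ t, ℓ t ^ q) ^ (1/q) := by
    rcases eq_or_lt_of_le hq1 with hq | hq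
    · -- q = 1
      subst hq
      simp only [one_div, inv_one, sub_self, Real.rpow_zero, Real.rpow_one, one_mul]
      rw [Finset.sum_congr rfl (fun t _ => (Real.rpow_one (ℓ t)).symm)] at *
      simp only [Real.rpow_one]
      apply Finset.sum_le_sum
      intro t _
      rcases hbmem t with h | h <;> simp [h, hℓ0 t]
    · -- 1 < q
      have hpq : Real.HolderConjugate (q / (q - 1)) q :=
        (Real.HolderConjugate.conjExponent hq).symm
      have H := Real.inner_le_Lp_mul_Lq Finset.univ b ℓ hpq
      have hbsum : ∑ t, |b t| ^ (q / (q - 1)) = M := by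
        rw [hM]
        apply Finset.sum_congr rfl
        intro t _
        rcases hbmem t with h | h
        · rw [h]; simp [hbdef] at h; simp [h, Real.zero_rpow hpq.ne_zero]
        · rw [h]; simp [hbdef] at h; simp [h]
      have hℓabs : ∑ t, |ℓ t| ^ q = ∑ t, ℓ t ^ q :=
        Finset.sum_congr rfl fun t _ => by rw [abs_of_nonneg (hℓ0 t)]
      rw [hbsum, hℓabs] at H
      have hexp : 1 / (q / (q - 1)) = 1 - 1/q := by
        field_simp
      rwa [hexp] at H
  linarith
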